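/- Let L be an abelian group and A an L-graded commutative ring. Then the following are equivalent: (i) A has a unique maximal homogeneous ideal (A is L-local); (ii) the ring A_0 is local. -/

import Mathlib

variable {L A : Type*} [AddCommGroup L] [DecidableEq L] [CommRing A]

/-- A maximal homogeneous ideal of an `L`-graded ring: a proper homogeneous ideal such
that no homogeneous ideal lies strictly between it and the whole ring. -/
def IsMaximalHomogeneousIdeal (𝒜 : L → AddSubgroup A) [GradedRing 𝒜] (m : Ideal A) : Prop :=
  Ideal.IsHomogeneous 𝒜 m ∧ m ≠ ⊤ ∧
    ∀ J : Ideal A, Ideal.IsHomogeneous 𝒜 J → m < J → J = ⊤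

/-!
Let `M` be the sum of all proper homogeneous ideals. Since every proper homogeneous ideal lies
in a maximal homogeneous one, `A` is `L`-local exactly when `M` is proper, and then `M` is the
maximal homogeneous ideal. If `M` is proper, the nonunits of `A₀` generate proper homogeneous
ideals, so they all lie in the proper ideal `M ∩ A₀` and `A₀` is local. Conversely, the
degree-zero part of a proper homogeneous ideal `I` is `I ∩ A₀`, a proper ideal of `A₀`; so if
`A₀` is local with maximal ideal `𝔪`, the degree-zero component of every element of `M` lies
in `𝔪`, and `1 ∉ M`.
-/

open DirectSum

section

variable (𝒜 : L → AddSubgroup A) [GradedRing 𝒜]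

theorem isUnit_coe_gradeZero_iff (a : 𝒜 0) : IsUnit (a : A) ↔ IsUnit a := by
  refine ⟨fun h => ?_, fun h => h.map (SetLike.GradeZero.subring 𝒜).subtype⟩
  obtain ⟨b, hb⟩ := h.exists_right_inv
  have hb₀ : (a : A) * decompose 𝒜 b 0 = 1 := by
    rw [← coe_decompose_mul_of_left_mem_zero 𝒜 a.2, hb,
      decompose_of_mem_same 𝒜 SetLike.GradedOne.one_mem]
  exact IsUnit.of_mul_eq_one (decompose 𝒜 b 0) (Subtype.ext hb₀)

def properHomogeneousIdeals : Set (Ideal A) :=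
  {I | I.IsHomogeneous 𝒜 ∧ I ≠ ⊤}

def properHomogeneousSup : Ideal A :=
  sSup (properHomogeneousIdeals 𝒜)

theorem sSup_mem_properHomogeneousIdeals {c : Set (Ideal A)}
    (hc : c ⊆ properHomogeneousIdeals 𝒜) (hchain : IsChain (· ≤ ·) c) (hc_ne : c.Nonempty) :
    sSup c ∈ properHomogeneousIdeals 𝒜 := by
  refine ⟨Ideal.IsHomogeneous.sSup fun I hI => (hc hI).1, fun htop => ?_⟩
  obtain ⟨I, hIc, h1I⟩ := (Submodule.mem_sSup_of_directed hc_ne hchain.directedOn).mp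
    (htop ▸ Submodule.mem_top : (1 : A) ∈ sSup c)
  exact (hc hIc).2 ((Ideal.eq_top_iff_one I).mpr h1I)

theorem exists_le_isMaximalHomogeneousIdeal {I : Ideal A}
    (hI : I.IsHomogeneous 𝒜) (hI_ne_top : I ≠ ⊤) :
    ∃ m, I ≤ m ∧ IsMaximalHomogeneousIdeal 𝒜 m := by
  obtain ⟨m, hIm, ⟨hm, hm_ne_top⟩, hm_max⟩ := zorn_le_nonempty₀ (properHomogeneousIdeals 𝒜)
    (fun c hc hchain J hJ => ⟨sSup c, sSup_mem_properHomogeneousIdeals 𝒜 hc hchain ⟨J, hJ⟩,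
      fun _ hK => le_sSup hK⟩) I ⟨hI, hI_ne_top⟩
  refine ⟨m, hIm, hm, hm_ne_top, fun J hJ hmJ => ?_⟩
  by_contra hJ_ne_top
  exact hmJ.not_ge (hm_max ⟨hJ, hJ_ne_top⟩ hmJ.le)

theorem isHomogeneous_properHomogeneousSup : (properHomogeneousSup 𝒜).IsHomogeneous 𝒜 :=
  Ideal.IsHomogeneous.sSup fun _ hI => hI.1

theorem le_properHomogeneousSup {I : Ideal A} (hI : I.IsHomogeneous 𝒜) (hI_ne_top : I ≠ ⊤) :
    I ≤ properHomogeneousSup 𝒜 :=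
  le_sSup ⟨hI, hI_ne_top⟩

theorem existsUnique_isMaximalHomogeneousIdeal_iff :
    (∃! m : Ideal A, IsMaximalHomogeneousIdeal 𝒜 m) ↔ properHomogeneousSup 𝒜 ≠ ⊤ := by
  constructor
  · rintro ⟨m, hm, hm_unique⟩
    refine ne_top_of_le_ne_top hm.2.1 (sSup_le fun I ⟨hI, hI_ne_top⟩ => ?_)
    obtain ⟨m', hIm', hm'⟩ := exists_le_isMaximalHomogeneousIdeal 𝒜 hI hI_ne_top
    exact hm_unique m' hm' ▸ hIm'
  · intro hM
    refine ⟨properHomogeneousSup 𝒜, ⟨isHomogeneous_properHomogeneousSup 𝒜, hM,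
      fun J hJ hMJ => ?_⟩, fun m ⟨hm, hm_ne_top, hm_max⟩ => ?_⟩
    · by_contra hJ_ne_top
      exact hMJ.not_ge (le_properHomogeneousSup 𝒜 hJ hJ_ne_top)
    · refine (le_properHomogeneousSup 𝒜 hm hm_ne_top).eq_or_lt.resolve_right fun hlt => ?_
      exact hM (hm_max _ (isHomogeneous_properHomogeneousSup 𝒜) hlt)

theorem coe_mem_properHomogeneousSup_of_not_isUnit {a : 𝒜 0} (ha : ¬IsUnit a) :
    (a : A) ∈ properHomogeneousSup 𝒜 := by
  refine le_properHomogeneousSup 𝒜 ?_ ?_ (Ideal.mem_span_singleton_self _)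
  · exact Ideal.homogeneous_span _ _ fun x hx => hx ▸ ⟨0, a.2⟩
  · rw [Ne, Ideal.span_singleton_eq_top, isUnit_coe_gradeZero_iff]
    exact ha

theorem isLocalRing_gradeZero_of_properHomogeneousSup_ne_top (hM : properHomogeneousSup 𝒜 ≠ ⊤) :
    IsLocalRing (𝒜 0) := by
  have : Nontrivial A :=
    nontrivial_of_ne 0 1 fun h => hM ((Ideal.eq_top_iff_one _).mpr (h ▸ zero_mem _))
  have : Nontrivial (𝒜 0) := (SetLike.GradeZero.subring 𝒜).nontrivial
  refine IsLocalRing.of_nonunits_add fun a b ha hb hab => hM ?_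
  have hab_mem : ((a + b : 𝒜 0) : A) ∈ properHomogeneousSup 𝒜 :=
    add_mem (coe_mem_properHomogeneousSup_of_not_isUnit 𝒜 ha)
      (coe_mem_properHomogeneousSup_of_not_isUnit 𝒜 hb)
  exact Ideal.eq_top_of_isUnit_mem _ hab_mem ((isUnit_coe_gradeZero_iff 𝒜 _).mpr hab)

theorem decompose_zero_mem_maximalIdeal [IsLocalRing (𝒜 0)] {x : A}
    (hx : x ∈ properHomogeneousSup 𝒜) :
    decompose 𝒜 x 0 ∈ IsLocalRing.maximalIdeal (𝒜 0) := by
  rw [properHomogeneousSup, sSup_eq_iSup'] at hx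
  refine Submodule.iSup_induction (motive := fun y => decompose 𝒜 y 0 ∈ _) _ hx
    (fun I y hy hunit => ?_) (by simp) fun y z hy hz => by simpa using add_mem hy hz
  exact I.2.2 (Ideal.eq_top_of_isUnit_mem _ (I.2.1 0 hy)
    ((isUnit_coe_gradeZero_iff 𝒜 _).mpr hunit))

theorem properHomogeneousSup_ne_top_of_isLocalRing [IsLocalRing (𝒜 0)] :
    properHomogeneousSup 𝒜 ≠ ⊤ := by
  intro htop
  have h1 := decompose_zero_mem_maximalIdeal 𝒜 (htop ▸ Submodule.mem_top : (1 : A) ∈ _)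
  simp only [decompose_one, one_def, of_eq_same] at h1
  exact (IsLocalRing.maximalIdeal.isMaximal (𝒜 0)).ne_top
    ((Ideal.eq_top_iff_one _).mpr h1)

end

/-- An `L`-graded commutative ring is `L`-local (has a unique maximal homogeneous ideal)
if and only if its degree-zero subring `A₀` is a local ring. -/
theorem lLocal_iff_gradeZero_isLocalRing (𝒜 : L → AddSubgroup A) [GradedRing 𝒜] :
    (∃! m : Ideal A, IsMaximalHomogeneousIdeal 𝒜 m) ↔ IsLocalRing (𝒜 0) := by
  rw [existsUnique_isMaximalHomogeneousIdeal_iff]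
  exact ⟨isLocalRing_gradeZero_of_properHomogeneousSup_ne_top 𝒜,
    fun _ => properHomogeneousSup_ne_top_of_isLocalRing 𝒜⟩
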